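/- arXiv:1102.4804 — 4 statements merged into one kernel-verified Lean document; each statement's English description precedes it below -/
import Mathlib

section
/- If a monomial ideal's Möbius sum is taken over the lcm-lattice generated by two finite sets X and Y of monomials such that every monomial in X is coprime to every monomial in Y, then the Möbius sum factors: M(L(X ∪ Y)) = M(L(X))·M(L(Y)). -/
open scoped Classical

/-- Monomials in variables `σ` are identified with their exponent vectors `σ →₀ ℕ`;
divisibility is the pointwise order, lcm is `⊔`, gcd is `⊓`, and the monomial `1` is `0`.
The lcm-lattice on a finite set `X` of monomials consists of the lcms of all subsets of
`X` (the lcm of the empty set being `1`, i.e. `0` as an exponent vector). -/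
noncomputable def lcmLattice {σ : Type*} (X : Finset (σ →₀ ℕ)) : Finset (σ →₀ ℕ) :=
  X.powerset.image fun S => S.sup id

/-- `μ` is the Möbius function of the finite poset of monomials `L` (with bottom `1 = 0`):
`μ(1) = 1` and for every `x ∈ L`, `x ≠ 1`, `Σ_{y ∈ L, y ≤ x} μ(y) = 0`. -/
def IsMobiusOf {σ : Type*} (L : Finset (σ →₀ ℕ)) (μ : (σ →₀ ℕ) → ℤ) : Prop :=
  μ 0 = 1 ∧ ∀ x ∈ L, x ≠ 0 → (∑ y ∈ L, if y ≤ x then μ y else 0) = 0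

/-- The Möbius sum `M(L) = Σ_{x ∈ L} μ(x)·x`, an element of the polynomial ring whose
monomials have exponent vectors in `σ →₀ ℕ`. -/
noncomputable def mobiusSum {σ : Type*} (L : Finset (σ →₀ ℕ)) (μ : (σ →₀ ℕ) → ℤ) :
    MvPolynomial σ ℤ :=
  ∑ x ∈ L, μ x • MvPolynomial.monomial x 1

/-! Coprimality makes `(a, b) ↦ a ⊔ b` an order isomorphism from `L(X) × L(Y)` onto `L(X ∪ Y)`.
Hence `(a, b) ↦ μ (a ⊔ b)` and `(a, b) ↦ μX a * μY b` satisfy the same Möbius recursion on the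
product poset, whose solution is unique; and the lcm of coprime monomials is their product
(`a ⊔ b = a + b` on exponents), so the Möbius sum factors. -/

open Finset FinsetFamily

noncomputable instance Finsupp.instDistribLattice {ι M : Type*} [Zero M] [DistribLattice M] :
    DistribLattice (ι →₀ M) where
  __ := Finsupp.lattice
  le_sup_inf _ _ _ _ := le_sup_inf

theorem sup_le_sup_iff_of_disjoint {α : Type*} [DistribLattice α] [OrderBot α] {a b a' b' : α}
    (h : Disjoint a b') (h' : Disjoint a' b) : a ⊔ b ≤ a' ⊔ b' ↔ a ≤ a' ∧ b ≤ b' :=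
  ⟨fun hle => ⟨Disjoint.left_le_of_le_sup_right (le_sup_left.trans hle) h,
    Disjoint.left_le_of_le_sup_left (le_sup_right.trans hle) h'.symm⟩,
    fun ⟨ha, hb⟩ => sup_le_sup ha hb⟩

theorem Finset.injOn_sup_product_of_disjoint {α : Type*} [DistribLattice α] [OrderBot α]
    {s t : Finset α} (hst : ∀ a ∈ s, ∀ b ∈ t, Disjoint a b) :
    Set.InjOn (Function.uncurry (· ⊔ ·)) (↑(s ×ˢ t) : Set (α × α)) := by
  rintro ⟨a, b⟩ hab ⟨a', b'⟩ hab' heq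
  simp only [coe_product, Set.mem_prod, mem_coe] at hab hab'
  have h₁ := (sup_le_sup_iff_of_disjoint (hst _ hab.1 _ hab'.2) (hst _ hab'.1 _ hab.2)).1 heq.le
  have h₂ := (sup_le_sup_iff_of_disjoint (hst _ hab'.1 _ hab.2) (hst _ hab.1 _ hab'.2)).1 heq.ge
  exact Prod.ext (h₁.1.antisymm h₂.1) (h₁.2.antisymm h₂.2)

theorem Finsupp.sup_eq_add_of_disjoint {ι : Type*} {f g : ι →₀ ℕ} (h : Disjoint f g) :
    f ⊔ g = f + g := by
  ext i
  have := DFunLike.congr_fun (_root_.disjoint_iff.1 h) i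
  simp only [inf_apply, bot_eq_zero, Finsupp.coe_zero, Pi.zero_apply] at this
  simp only [sup_apply, Finsupp.add_apply]
  omega

theorem Finset.eqOn_of_sum_le_eq {α M : Type*} [PartialOrder α] [DecidableLE α] [WellFoundedLT α]
    [AddCancelCommMonoid M] {P : Finset α} {f g : α → M}
    (h : ∀ p ∈ P, ∑ q ∈ P, (if q ≤ p then f q else 0) = ∑ q ∈ P, (if q ≤ p then g q else 0)) :
    Set.EqOn f g P := by
  intro p
  induction p using WellFoundedLT.induction with
  | _ p ih =>
  intro hp
  have hlt : ∀ q ∈ P.erase p, (if q ≤ p then f q else 0) = if q ≤ p then g q else 0 := by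
    intro q hq
    obtain ⟨hne, hqP⟩ := mem_erase.1 hq
    split_ifs with hqp
    exacts [ih q (lt_of_le_of_ne hqp hne) hqP, rfl]
  have := h p hp
  rw [← add_sum_erase _ _ hp, ← add_sum_erase _ _ hp, sum_congr rfl hlt] at this
  simpa using add_right_cancel this

theorem IsMobiusOf.sum_le_eq {σ : Type*} {L : Finset (σ →₀ ℕ)} {μ : (σ →₀ ℕ) → ℤ}
    (hμ : IsMobiusOf L μ) {x : σ →₀ ℕ} (hx : x ∈ L) :
    ∑ y ∈ L, (if y ≤ x then μ y else 0) = if x = 0 then 1 else 0 := by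
  split_ifs with hx0
  · subst hx0
    rw [sum_eq_single_of_mem 0 hx (fun y _ hy => if_neg (by simpa using hy)), if_pos le_rfl, hμ.1]
  · exact hμ.2 x hx hx0

section Sups

variable {σ : Type*} {A B : Finset (σ →₀ ℕ)}

theorem IsMobiusOf.apply_sup (hAB : ∀ a ∈ A, ∀ b ∈ B, Disjoint a b)
    {μ μA μB : (σ →₀ ℕ) → ℤ} (hμ : IsMobiusOf (A ⊻ B) μ) (hμA : IsMobiusOf A μA)
    (hμB : IsMobiusOf B μB) {a b : σ →₀ ℕ} (ha : a ∈ A) (hb : b ∈ B) :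
    μ (a ⊔ b) = μA a * μB b := by
  refine eqOn_of_sum_le_eq (P := A ×ˢ B) (f := fun p => μ (p.1 ⊔ p.2))
    (g := fun p => μA p.1 * μB p.2) (fun p hp => ?_) (mk_mem_product ha hb)
  obtain ⟨hpA, hpB⟩ := mem_product.1 hp
  calc ∑ q ∈ A ×ˢ B, (if q ≤ p then μ (q.1 ⊔ q.2) else 0)
      = ∑ w ∈ A ⊻ B, (if w ≤ p.1 ⊔ p.2 then μ w else 0) := by
        rw [← image_sup_product, sum_image (injOn_sup_product_of_disjoint hAB)]
        refine sum_congr rfl fun q hq => ?_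
        obtain ⟨hqA, hqB⟩ := mem_product.1 hq
        simp only [Function.uncurry, Prod.le_def,
          sup_le_sup_iff_of_disjoint (hAB _ hqA _ hpB) (hAB _ hpA _ hqB)]
    _ = if p.1 = 0 ∧ p.2 = 0 then 1 else 0 := by
        rw [hμ.sum_le_eq (mem_sups.2 ⟨_, hpA, _, hpB, rfl⟩)]
        simp only [← bot_eq_zero, sup_eq_bot_iff]
    _ = (∑ x ∈ A, if x ≤ p.1 then μA x else 0) * ∑ y ∈ B, if y ≤ p.2 then μB y else 0 := by
        rw [hμA.sum_le_eq hpA, hμB.sum_le_eq hpB, ite_zero_mul_ite_zero, one_mul]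
    _ = ∑ q ∈ A ×ˢ B, (if q ≤ p then μA q.1 * μB q.2 else 0) := by
        rw [sum_mul_sum, sum_product]
        simp only [Prod.le_def, ← ite_zero_mul_ite_zero]

theorem mobiusSum_sups (hAB : ∀ a ∈ A, ∀ b ∈ B, Disjoint a b)
    {μ μA μB : (σ →₀ ℕ) → ℤ} (hμ : IsMobiusOf (A ⊻ B) μ) (hμA : IsMobiusOf A μA)
    (hμB : IsMobiusOf B μB) :
    mobiusSum (A ⊻ B) μ = mobiusSum A μA * mobiusSum B μB := by
  rw [mobiusSum, mobiusSum, mobiusSum, sum_mul_sum, ← sum_product', ← image_sup_product,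
    sum_image (injOn_sup_product_of_disjoint hAB)]
  refine sum_congr rfl fun p hp => ?_
  obtain ⟨ha, hb⟩ := mem_product.1 hp
  rw [Function.uncurry_apply_pair, hμ.apply_sup hAB hμA hμB ha hb,
    Finsupp.sup_eq_add_of_disjoint (hAB _ ha _ hb), smul_mul_smul_comm, MvPolynomial.monomial_mul,
    mul_one, mul_smul]

end Sups

theorem lcmLattice_union {σ : Type*} (X Y : Finset (σ →₀ ℕ)) :
    lcmLattice (X ∪ Y) = lcmLattice X ⊻ lcmLattice Y := by
  rw [lcmLattice, powerset_union]
  exact image_image₂_distrib fun _ _ => sup_union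

theorem disjoint_of_mem_lcmLattice {σ : Type*} {X Y : Finset (σ →₀ ℕ)}
    (hXY : ∀ x ∈ X, ∀ y ∈ Y, Disjoint x y) {a b : σ →₀ ℕ} (ha : a ∈ lcmLattice X)
    (hb : b ∈ lcmLattice Y) : Disjoint a b := by
  obtain ⟨S, hS, rfl⟩ := mem_image.1 ha
  obtain ⟨T, hT, rfl⟩ := mem_image.1 hb
  exact Finset.disjoint_sup_left.2 fun x hx => Finset.disjoint_sup_right.2 fun y hy =>
    hXY x (mem_powerset.1 hS hx) y (mem_powerset.1 hT hy)

/-- If every monomial of `X` is coprime to every monomial of `Y`, then the Möbius sum over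
the lcm-lattice `L(X ∪ Y)` factors: `M(L(X ∪ Y)) = M(L(X)) · M(L(Y))`. -/
theorem mobiusSum_mul_of_coprime {σ : Type*} (X Y : Finset (σ →₀ ℕ))
    (hcop : ∀ x ∈ X, ∀ y ∈ Y, x ⊓ y = 0)
    (μ μX μY : (σ →₀ ℕ) → ℤ)
    (hμ : IsMobiusOf (lcmLattice (X ∪ Y)) μ)
    (hμX : IsMobiusOf (lcmLattice X) μX)
    (hμY : IsMobiusOf (lcmLattice Y) μY) :
    mobiusSum (lcmLattice (X ∪ Y)) μ = mobiusSum (lcmLattice X) μX * mobiusSum (lcmLattice Y) μY := by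
  have hXY : ∀ x ∈ X, ∀ y ∈ Y, Disjoint x y := fun x hx y hy => disjoint_iff.2 (hcop x hx y hy)
  rw [lcmLattice_union] at hμ ⊢
  exact mobiusSum_sups (fun a ha b hb => disjoint_of_mem_lcmLattice hXY ha hb) hμ hμX hμY
end

section
/- The Ehrhart series of the edge polytope of an even cycle with 2n edges (n ≥ 2) equals (1 + t + ⋯ + t^{n−1})/(1 − t)^{2n−1}. -/
/-!
A point of the `m`-th dilate of the edge polytope of the cycle on `Fin (2n)` has coordinates
`x k = w (k - 1) + w k` for edge weights `w ≥ 0` of total `m`. Adding a multiple of the alternating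
vector `(-1)^e` to `w` changes neither `x` nor the total, and the multiple making the least weight on
an even edge vanish gives a unique representative. When `x` is integral this representative is
integral too, since walking around the cycle determines all weights from `x` and one integral
weight. So the lattice points of the `m`-th dilate are counted by the `μ : Fin (2n) → ℕ` of total
`m` vanishing on some even edge, of which there are `C(2n+m-1, m) - C(m+n-1, m-n)` by stars and bars,
i.e. the Ehrhart series is `(1 - t^n) / (1 - t)^(2n)`.
-/

open Pointwise
open scoped Classical

/-- The set of vertices of the edge polytope: for each edge {i,j}, the 0/1 indicator
vector of {i,j}. The edge polytope is their convex hull. -/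
noncomputable def edgePolytope {V : Type*} [Fintype V] (G : SimpleGraph V) : Set (V → ℝ) :=
  convexHull ℝ {x | ∃ i j, G.Adj i j ∧ x = fun k => if k = i ∨ k = j then (1 : ℝ) else 0}

/-- Number of lattice points in the `m`-th dilate of the edge polytope. -/
noncomputable def ehrhartCount {V : Type*} [Fintype V] (G : SimpleGraph V) (m : ℕ) : ℕ :=
  Nat.card {x : V → ℤ // (fun v => (x v : ℝ)) ∈ (m : ℝ) • edgePolytope G}

/-- The Ehrhart series of the edge polytope of `G`. -/
noncomputable def ehrhartSeries {V : Type*} [Fintype V] (G : SimpleGraph V) : PowerSeries ℚ :=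
  PowerSeries.mk fun m => (ehrhartCount G m : ℚ)

open Finset Finset.Nat PowerSeries SimpleGraph

section ConvexHull

variable {ι E : Type*} [Fintype ι] [AddCommGroup E] [Module ℝ E]

theorem convexHull_range_eq_image_stdSimplex (v : ι → E) :
    convexHull ℝ (Set.range v) = Fintype.linearCombination ℝ v '' stdSimplex ℝ ι := by
  rw [← convexHull_rangle_single_eq_stdSimplex, LinearMap.image_convexHull, ← Set.range_comp]
  congr 1
  ext i
  simp

theorem mem_smul_convexHull_range_iff [Nonempty ι] (v : ι → E) {t : ℝ} (ht : 0 ≤ t) {x : E} :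
    x ∈ t • convexHull ℝ (Set.range v) ↔
      ∃ w : ι → ℝ, 0 ≤ w ∧ ∑ i, w i = t ∧ ∑ i, w i • v i = x := by
  rw [convexHull_range_eq_image_stdSimplex]
  constructor
  · rintro ⟨_, ⟨s, ⟨hs₀, hs₁⟩, rfl⟩, rfl⟩
    refine ⟨t • s, smul_nonneg ht hs₀, by simp [← mul_sum, hs₁], ?_⟩
    simp [Fintype.linearCombination_apply, smul_sum, smul_smul]
  · rintro ⟨w, hw₀, hw₁, rfl⟩
    obtain rfl | ht := ht.eq_or_lt
    · have hw : w = 0 := funext fun i =>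
        (sum_eq_zero_iff_of_nonneg fun i _ => hw₀ i).1 hw₁ i (mem_univ i)
      rw [Set.zero_smul_set ((Set.nonempty_coe_sort.1 inferInstance :
        (stdSimplex ℝ ι).Nonempty).image _)]
      simp [hw]
    · rw [Set.mem_smul_set_iff_inv_smul_mem₀ ht.ne']
      refine ⟨t⁻¹ • w, ⟨smul_nonneg (inv_nonneg.2 ht.le) hw₀, ?_⟩, ?_⟩
      · simp [← mul_sum, hw₁, ht.ne']
      · simp [Fintype.linearCombination_apply, smul_sum, smul_smul]

end ConvexHull

section Cycle

open Fin.NatCast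

variable {N : ℕ} [NeZero N]

/-- Edge `e` of the cycle on `Fin N` joins `e` and `e + 1`, so vertex `k` lies on the edges
`k - 1` and `k`. -/
def cycleIncidence {M : Type*} [Add M] (w : Fin N → M) (k : Fin N) : M := w (k - 1) + w k

noncomputable def cycleEdgeVector (e : Fin N) : Fin N → ℝ :=
  fun k => if k = e ∨ k = e + 1 then 1 else 0

theorem Fin.val_one_of_one_lt (hN : 1 < N) : ((1 : Fin N) : ℕ) = 1 := by
  rw [Fin.val_one', Nat.mod_eq_of_lt hN]

theorem cycleGraph_adj_iff (hN : 1 < N) {u v : Fin N} :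
    (cycleGraph N).Adj u v ↔ v = u + 1 ∨ u = v + 1 := by
  rw [cycleGraph_adj', ← Fin.val_one_of_one_lt hN, Fin.val_inj, Fin.val_inj,
    sub_eq_iff_eq_add', sub_eq_iff_eq_add', or_comm]

theorem edgePolytope_cycleGraph (hN : 1 < N) :
    edgePolytope (cycleGraph N) = convexHull ℝ (Set.range cycleEdgeVector) := by
  unfold edgePolytope
  congr 1
  -- `edgePolytope` decides `k = i ∨ k = j` classically, hence `congr!` below instead of `rfl`
  ext x
  constructor
  · rintro ⟨i, j, hij, rfl⟩
    rcases (cycleGraph_adj_iff hN).1 hij with rfl | rfl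
    · exact ⟨i, by unfold cycleEdgeVector; congr!⟩
    · exact ⟨j, by unfold cycleEdgeVector; simp only [or_comm]⟩
  · rintro ⟨e, rfl⟩
    exact ⟨e, e + 1, (cycleGraph_adj_iff hN).2 (Or.inl rfl), by unfold cycleEdgeVector; congr!⟩

theorem sum_smul_cycleEdgeVector (hN : 1 < N) (w : Fin N → ℝ) :
    ∑ e, w e • cycleEdgeVector e = cycleIncidence w := by
  ext k
  have hk : k - 1 ≠ k :=
    mt sub_eq_self.1 (Fin.ne_of_val_ne (by rw [Fin.val_one_of_one_lt hN]; simp))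
  have h : ∀ e, (k = e ∨ k = e + 1) ↔ e ∈ ({k - 1, k} : Finset (Fin N)) := by
    intro e
    simp [eq_sub_iff_add_eq, eq_comm, or_comm]
  simp only [Finset.sum_apply, Pi.smul_apply, cycleEdgeVector, h, smul_eq_mul, mul_ite, mul_one,
    mul_zero]
  rw [sum_ite_mem, univ_inter, sum_pair hk, cycleIncidence]

theorem mem_smul_edgePolytope_cycleGraph_iff (hN : 1 < N) {t : ℝ} (ht : 0 ≤ t) {x : Fin N → ℝ} :
    x ∈ t • edgePolytope (cycleGraph N) ↔
      ∃ w : Fin N → ℝ, 0 ≤ w ∧ ∑ e, w e = t ∧ cycleIncidence w = x := by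
  simp_rw [edgePolytope_cycleGraph hN, mem_smul_convexHull_range_iff _ ht,
    sum_smul_cycleEdgeVector hN]

theorem mem_of_cycleIncidence_mem {G : Type*} [AddCommGroup G] (S : AddSubgroup G)
    {w : Fin N → G} (hw : ∀ k, cycleIncidence w k ∈ S) {e : Fin N} (he : w e ∈ S) (k : Fin N) :
    w k ∈ S := by
  suffices h : ∀ j : ℕ, w (e + (j : Fin N)) ∈ S by simpa using h (k - e).val
  intro j
  induction j with
  | zero => simpa using he
  | succ j ih =>
    have h := S.sub_mem (hw (e + (j : Fin N) + 1)) ih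
    rwa [cycleIncidence, add_sub_cancel_right, add_sub_cancel_left, add_assoc,
      ← Nat.cast_succ] at h

end Cycle

section EvenCycle

variable {N : ℕ}

def altSign (R : Type*) [Ring R] (k : Fin N) : R := (-1) ^ (k : ℕ)

variable {R : Type*} [Ring R]

theorem altSign_sub_one [NeZero N] (hN : Even N) (k : Fin N) :
    altSign R (k - 1) = -altSign R k := by
  have hk : ((k - 1 + 1 : Fin N) : ℕ) = ((k - 1 : Fin N) + 1 : ℕ) % N := by
    rw [Fin.val_add, Fin.val_one', Nat.add_mod_mod]
  rw [sub_add_cancel] at hk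
  rw [altSign, altSign, hk, neg_one_pow_eq_pow_mod_two (_ % N), Nat.mod_mod_of_dvd _ hN.two_dvd,
    ← neg_one_pow_eq_pow_mod_two, pow_succ, mul_neg_one, neg_neg]

theorem sum_altSign (hN : Even N) : ∑ k : Fin N, altSign R k = 0 := by
  simp only [altSign]
  rw [Fin.sum_univ_eq_sum_range (fun i => (-1 : R) ^ i), neg_one_geom_sum, if_pos hN]

theorem altSign_of_even {k : Fin N} (hk : Even (k : ℕ)) : altSign R k = 1 := hk.neg_one_pow

theorem altSign_of_not_even {k : Fin N} (hk : ¬Even (k : ℕ)) : altSign R k = -1 :=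
  (Nat.not_even_iff_odd.1 hk).neg_one_pow

end EvenCycle

section NormalForm

variable {N : ℕ} [NeZero N]

theorem exists_shift_vanishing_at_even {R : Type*} [CommRing R] [LinearOrder R]
    [IsOrderedRing R] (hN : Even N) {w : Fin N → R} (hw : 0 ≤ w) :
    ∃ w' : Fin N → R, 0 ≤ w' ∧ ∑ k, w' k = ∑ k, w k ∧ cycleIncidence w' = cycleIncidence w ∧
      ∃ e : Fin N, Even (e : ℕ) ∧ w' e = 0 := by
  obtain ⟨e, he, hmin⟩ := exists_min_image {k : Fin N | Even (k : ℕ)} w ⟨0, by simp⟩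
  rw [mem_filter] at he
  refine ⟨w - w e • altSign R, fun k => ?_, ?_, ?_, e, he.2, by simp [altSign_of_even he.2]⟩
  · by_cases hk : Even (k : ℕ)
    · simpa [altSign_of_even hk] using hmin k (by simp [hk])
    · simpa [altSign_of_not_even hk] using add_nonneg (hw k) (hw e)
  · simp [sum_sub_distrib, ← mul_sum, sum_altSign hN]
  · ext k
    simp only [cycleIncidence, Pi.sub_apply, Pi.smul_apply, smul_eq_mul, altSign_sub_one hN]
    ring

theorem exists_natCast_eq_of_cycleIncidence_eq_intCast {R : Type*} [CommRing R] [LinearOrder R]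
    [IsStrictOrderedRing R] {w : Fin N → R} (hw : 0 ≤ w) {x : Fin N → ℤ}
    (hx : cycleIncidence w = fun k => (x k : R)) {e : Fin N} (he : w e = 0) :
    ∃ μ : Fin N → ℕ, w = fun k => (μ k : R) := by
  have hint : ∀ k, w k ∈ (Int.castAddHom R).range :=
    mem_of_cycleIncidence_mem _ (fun k => ⟨x k, by simp [hx]⟩) (e := e) ⟨0, by simp [he]⟩
  choose z hz using hint
  simp only [Int.coe_castAddHom] at hz
  refine ⟨fun k => (z k).toNat, funext fun k => ?_⟩
  have hzk : (0 : R) ≤ z k := hz k ▸ hw k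
  rw [← hz k]
  exact_mod_cast (Int.toNat_of_nonneg (by exact_mod_cast hzk)).symm

theorem cycleIncidence_injOn (hN : Even N) :
    Set.InjOn (cycleIncidence : (Fin N → ℤ) → Fin N → ℤ)
      {μ | 0 ≤ μ ∧ ∃ e : Fin N, Even (e : ℕ) ∧ μ e = 0} := by
  rintro μ ⟨hμ, e, he, hμe⟩ ν ⟨hν, f, hf, hνf⟩ h
  set c := μ e - ν e with hc_def
  have hd : ∀ k, μ k - ν k - c * altSign ℤ k ∈ (⊥ : AddSubgroup ℤ) := by
    refine mem_of_cycleIncidence_mem ⊥ (fun k => ?_) (e := e) ?_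
    · have hk := congrFun h k
      simp only [cycleIncidence, AddSubgroup.mem_bot, altSign_sub_one hN] at hk ⊢
      linarith
    · simp [altSign_of_even he, c]
  have hc : c = 0 := by
    have hdf := hd f
    rw [AddSubgroup.mem_bot, altSign_of_even hf, hνf] at hdf
    have hμf : 0 ≤ μ f := hμ f
    have hνe : 0 ≤ ν e := hν e
    omega
  funext k
  have hdk := hd k
  rw [AddSubgroup.mem_bot, hc] at hdk
  linarith

end NormalForm

def cycleNormalForms (N m : ℕ) : Finset (Fin N → ℕ) :=
  {μ ∈ antidiagonalTuple N m | ∃ e : Fin N, Even (e : ℕ) ∧ μ e = 0}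

section LatticePoints

variable {N : ℕ} [NeZero N]

theorem latticePoints_smul_edgePolytope_cycleGraph (hN : Even N) (m : ℕ) :
    {x : Fin N → ℤ | (fun v => (x v : ℝ)) ∈ (m : ℝ) • edgePolytope (cycleGraph N)} =
      (cycleNormalForms N m).image fun μ => cycleIncidence fun k => (μ k : ℤ) := by
  have hN1 : 1 < N := by
    obtain ⟨r, hr⟩ := hN
    have := NeZero.ne N
    omega
  ext x
  simp only [Set.mem_ofPred_eq, coe_image, Set.mem_image, mem_coe, cycleNormalForms, mem_filter,
    mem_antidiagonalTuple, mem_smul_edgePolytope_cycleGraph_iff hN1 (Nat.cast_nonneg m)]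
  constructor
  · rintro ⟨w, hw, hsum, hx⟩
    obtain ⟨w', hw', hsum', hx', e, he, hw'e⟩ := exists_shift_vanishing_at_even hN hw
    obtain ⟨μ, rfl⟩ := exists_natCast_eq_of_cycleIncidence_eq_intCast hw' (hx'.trans hx) hw'e
    beta_reduce at hsum' hw'e
    refine ⟨μ, ⟨by exact_mod_cast hsum'.trans hsum, e, he, by exact_mod_cast hw'e⟩, ?_⟩
    ext k
    have hk := congrFun (hx'.trans hx) k
    simp only [cycleIncidence] at hk ⊢
    exact_mod_cast hk
  · rintro ⟨μ, ⟨hsum, -⟩, rfl⟩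
    refine ⟨fun k => (μ k : ℝ), fun k => Nat.cast_nonneg _, by simp [← hsum], ?_⟩
    ext k
    simp [cycleIncidence]

theorem ehrhartCount_cycleGraph (hN : Even N) (m : ℕ) :
    ehrhartCount (cycleGraph N) m = #(cycleNormalForms N m) := by
  rw [ehrhartCount, ← Set.coe_ofPred, latticePoints_smul_edgePolytope_cycleGraph hN,
    Nat.card_coe_set_eq, Set.ncard_coe_finset, card_image_of_injOn]
  rintro μ hμ ν hν h
  obtain ⟨-, e, he, hμe⟩ := mem_filter.1 hμ
  obtain ⟨-, f, hf, hνf⟩ := mem_filter.1 hν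
  have hμν := cycleIncidence_injOn hN ⟨fun k => by simp, e, he, by simp [hμe]⟩
    ⟨fun k => by simp, f, hf, by simp [hνf]⟩ h
  funext k
  exact_mod_cast congrFun hμν k

end LatticePoints

theorem card_antidiagonalTuple (k m : ℕ) : #(antidiagonalTuple k m) = (k + m - 1).choose m := by
  rw [← Nat.card_eq_finsetCard,
    Nat.card_congr (Equiv.subtypeEquivRight fun μ => mem_antidiagonalTuple),
    ← Nat.card_congr (Sym.equivNatSumOfFintype (Fin k) m), Nat.card_eq_fintype_card,
    Sym.card_sym_eq_choose, Fintype.card_fin]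

theorem card_filter_le_antidiagonalTuple (k m : ℕ) (a : Fin k → ℕ) :
    #{μ ∈ antidiagonalTuple k m | a ≤ μ} =
      if ∑ i, a i ≤ m then #(antidiagonalTuple k (m - ∑ i, a i)) else 0 := by
  split_ifs with h
  · symm
    refine card_nbij' (· + a) (· - a) (fun ν hν => ?_) (fun μ hμ => ?_) (fun ν _ => ?_)
      (fun μ hμ => ?_)
    · simp only [coe_filter, mem_antidiagonalTuple, Set.mem_ofPred_eq, mem_coe] at hν ⊢
      refine ⟨?_, le_add_self⟩
      rw [Pi.add_def, sum_add_distrib, hν]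
      omega
    · simp only [coe_filter, mem_antidiagonalTuple, Set.mem_ofPred_eq, mem_coe] at hμ ⊢
      rw [Pi.sub_def, sum_tsub_distrib _ fun i _ => hμ.2 i, hμ.1]
    · simp
    · simp only [coe_filter, mem_antidiagonalTuple, Set.mem_ofPred_eq] at hμ
      exact tsub_add_cancel_of_le hμ.2
  · rw [card_eq_zero, filter_eq_empty_iff]
    intro μ hμ haμ
    exact h (mem_antidiagonalTuple.1 hμ ▸ sum_le_sum fun i _ => haμ i)

theorem sum_ite_even_fin_two_mul (n : ℕ) :
    ∑ e : Fin (2 * n), (if Even (e : ℕ) then 1 else 0) = n := by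
  rw [Fin.sum_univ_eq_sum_range (fun i => if Even i then 1 else 0)]
  induction n with
  | zero => simp
  | succ n ih =>
    rw [mul_add_one, sum_range_succ, sum_range_succ, ih]
    simp [parity_simps]

theorem card_cycleNormalForms_add (n m : ℕ) :
    #(cycleNormalForms (2 * n) m) + (if n ≤ m then #(antidiagonalTuple (2 * n) (m - n)) else 0) =
      #(antidiagonalTuple (2 * n) m) := by
  have hle : ∀ μ : Fin (2 * n) → ℕ,
      (fun e : Fin (2 * n) => if Even (e : ℕ) then 1 else 0) ≤ μ ↔
        ¬∃ e : Fin (2 * n), Even (e : ℕ) ∧ μ e = 0 := by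
    intro μ
    simp only [Pi.le_def, not_exists, not_and]
    refine forall_congr' fun e => ?_
    split_ifs <;> simp_all [Nat.one_le_iff_ne_zero]
  have hcard := card_filter_le_antidiagonalTuple (2 * n) m
    fun e : Fin (2 * n) => if Even (e : ℕ) then 1 else 0
  rw [sum_ite_even_fin_two_mul, filter_congr fun μ _ => hle μ] at hcard
  rw [← hcard, cycleNormalForms, card_filter_add_card_filter_not]

theorem coeff_invOneSubPow {R : Type*} [CommRing R] {k : ℕ} (hk : 0 < k) (m : ℕ) :
    coeff m (invOneSubPow R k : R⟦X⟧) = #(antidiagonalTuple k m) := by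
  rw [invOneSubPow_val_eq_mk_sub_one_add_choose_of_pos _ _ hk, coeff_mk, card_antidiagonalTuple,
    Nat.choose_symm_add, show k - 1 + m = k + m - 1 by omega]

theorem ehrhartSeries_cycleGraph_two_mul {n : ℕ} (hn : 0 < n) :
    ehrhartSeries (cycleGraph (2 * n)) = (1 - X ^ n) * (invOneSubPow ℚ (2 * n) : ℚ⟦X⟧) := by
  have : NeZero (2 * n) := ⟨by omega⟩
  ext m
  have hcard := card_cycleNormalForms_add n m
  rw [ehrhartSeries, coeff_mk, ehrhartCount_cycleGraph (even_two_mul n), sub_mul, one_mul,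
    map_sub, coeff_X_pow_mul', coeff_invOneSubPow (by omega)]
  split_ifs at hcard ⊢ <;> simp [coeff_invOneSubPow (by omega : 0 < 2 * n), ← hcard]

/-- The Ehrhart series of the edge polytope of an even cycle with `2n` edges (`n ≥ 2`)
equals `(1 + t + ⋯ + t^(n-1)) / (1 - t)^(2n-1)`. -/
theorem ehrhartSeries_even_cycle (n : ℕ) (hn : 2 ≤ n) :
    ehrhartSeries (SimpleGraph.cycleGraph (2 * n)) * (1 - PowerSeries.X) ^ (2 * n - 1) =
      ∑ i ∈ Finset.range n, (PowerSeries.X : PowerSeries ℚ) ^ i := by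
  have hinv : (invOneSubPow ℚ (2 * n) : ℚ⟦X⟧) * (1 - X) ^ (2 * n) = 1 := by
    rw [← invOneSubPow_inv_eq_one_sub_pow]
    exact (invOneSubPow ℚ (2 * n)).val_inv
  have hpow : (1 - X : ℚ⟦X⟧) ^ (2 * n) = (1 - X) ^ (2 * n - 1) * (1 - X) := by
    rw [← pow_succ, Nat.sub_add_cancel (by omega)]
  rw [hpow] at hinv
  rw [ehrhartSeries_cycleGraph_two_mul (by omega), ← mul_neg_geom_sum]
  linear_combination (∑ i ∈ range n, (X : ℚ⟦X⟧) ^ i) * hinv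
end

section
/- Let α be a root of unity and let f be a nonzero polynomial of the form f(x) = v(x)·Π_{i=1}^{a}(x+i) where every complex root of v lies on the vertical line Re(x) = −(a+1)/2. Then the polynomial g(x) = f(x−1) − α·f(x) has the form g(x) = w(x)·Π_{i=1}^{a−1}(x+i) where every root of w lies on Re(x) = −a/2. -/
/-!
Write `f = v · ∏_{i=1}^{a} (X + i)`. Shifting the product by one gives
`f(x-1) - α f(x) = w(x) · ∏_{i=1}^{a-1} (x + i)` with `w(x) = x v(x-1) - α (x+a) v(x)`.
If `w(z) = 0` then `|z| |v(z-1)| = |z+a| |v(z)|`. Every root `r` of `v` lies on the line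
`Re = -(a+1)/2`, the perpendicular bisector of `r` and `r + 1` passes through `Re = -a/2`, and
so does the bisector of `0` and `-a`; hence right of the line `Re = -a/2` each factor of
`|v(z-1)|` is at most the matching factor of `|v(z)|` while `|z| < |z+a|`, left of it all
inequalities reverse, and equality forces `Re z = -a/2`.
-/

open Polynomial

theorem Polynomial.norm_eval_le_norm_eval_of_forall_mem_roots {K : Type*} [NormedField K]
    [IsAlgClosed K] {v : K[X]} {x y : K} (h : ∀ r ∈ v.roots, ‖x - r‖ ≤ ‖y - r‖) :
    ‖v.eval x‖ ≤ ‖v.eval y‖ := by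
  have norm_prod (t : K) :
      ‖(v.roots.map (t - ·)).prod‖ = (v.roots.map (‖t - ·‖)).prod := by
    simpa using map_multiset_prod (normHom : K →*₀ ℝ) (v.roots.map (t - ·))
  rw [(IsAlgClosed.splits v).eval_eq_prod_roots, (IsAlgClosed.splits v).eval_eq_prod_roots,
    norm_mul, norm_mul, norm_prod, norm_prod]
  gcongr
  exact Multiset.prod_map_le_prod_map₀ _ _ (fun _ _ ↦ norm_nonneg _) h

theorem Complex.norm_sub_lt_norm_sub_iff {p q : ℂ} (z : ℂ) (hpq : p.im = q.im) :
    ‖z - q‖ < ‖z - p‖ ↔ 0 < (q.re - p.re) * (2 * z.re - p.re - q.re) := by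
  rw [← sq_lt_sq₀ (norm_nonneg _) (norm_nonneg _), Complex.sq_norm, Complex.sq_norm,
    ← sub_pos, Complex.normSq_apply, Complex.normSq_apply]
  simp only [Complex.sub_re, Complex.sub_im, hpq]
  ring_nf

section CriticalLine

variable {a : ℝ} {v : ℂ[X]} (hv : ∀ z : ℂ, v.IsRoot z → z.re = -(a + 1) / 2) {z : ℂ}
include hv

theorem norm_eval_sub_one_le_norm_eval (hz : -a / 2 < z.re) :
    ‖v.eval (z - 1)‖ ≤ ‖v.eval z‖ := by
  refine norm_eval_le_norm_eval_of_forall_mem_roots fun r hr ↦ ?_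
  have hr := hv r (isRoot_of_mem_roots hr)
  have key := (Complex.norm_sub_lt_norm_sub_iff (p := r) (q := 1 + r) z (by simp)).2
    (by simp only [Complex.add_re, Complex.one_re, hr]; nlinarith)
  rw [sub_sub]
  exact key.le

theorem norm_eval_le_norm_eval_sub_one (hz : z.re < -a / 2) :
    ‖v.eval z‖ ≤ ‖v.eval (z - 1)‖ := by
  refine norm_eval_le_norm_eval_of_forall_mem_roots fun r hr ↦ ?_
  have hr := hv r (isRoot_of_mem_roots hr)
  have key := (Complex.norm_sub_lt_norm_sub_iff (p := 1 + r) (q := r) z (by simp)).2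
    (by simp only [Complex.add_re, Complex.one_re, hr]; nlinarith)
  rw [sub_sub]
  exact key.le

theorem re_eq_of_mul_eval_sub_one_eq {α : ℂ} (ha : 0 < a) (hα : ‖α‖ = 1)
    (hz : z * v.eval (z - 1) = α * ((z + a) * v.eval z)) : z.re = -a / 2 := by
  have hnorm : ‖v.eval (z - 1)‖ * ‖z‖ = ‖v.eval z‖ * ‖z + a‖ := by
    simpa [norm_mul, hα, mul_comm] using congrArg norm hz
  have eval_pos (y : ℂ) (hy : y.re ≠ -(a + 1) / 2) : 0 < ‖v.eval y‖ :=
    norm_pos_iff.2 fun h ↦ hy (hv y h)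
  rcases lt_trichotomy z.re (-a / 2) with hlt | heq | hgt
  · have hza : ‖z - -a‖ < ‖z - 0‖ :=
      (Complex.norm_sub_lt_norm_sub_iff z (by simp)).2
        (by simp only [Complex.neg_re, Complex.ofReal_re, Complex.zero_re]; nlinarith)
    rw [sub_neg_eq_add, sub_zero] at hza
    have := mul_lt_mul' (norm_eval_le_norm_eval_sub_one hv hlt) hza (norm_nonneg _)
      (eval_pos _ (by simp only [Complex.sub_re, Complex.one_re]; linarith))
    linarith
  · exact heq
  · have hza : ‖z - 0‖ < ‖z - -a‖ :=
      (Complex.norm_sub_lt_norm_sub_iff z (by simp)).2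
        (by simp only [Complex.neg_re, Complex.ofReal_re, Complex.zero_re]; nlinarith)
    rw [sub_neg_eq_add, sub_zero] at hza
    have := mul_lt_mul' (norm_eval_sub_one_le_norm_eval hv hgt) hza (norm_nonneg _)
      (eval_pos _ (by linarith))
    linarith

end CriticalLine

section Shift

variable {R : Type*} [CommRing R]

theorem prod_Icc_X_add_C_comp_X_sub_C_one (b : ℕ) :
    (∏ i ∈ Finset.Icc 1 (b + 1), (X + C (i : R))).comp (X - C 1)
      = X * ∏ i ∈ Finset.Icc 1 b, (X + C (i : R)) := by
  induction b with
  | zero => simp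
  | succ b ih =>
    rw [Finset.prod_Icc_succ_top (by omega), mul_comp, ih,
      Finset.prod_Icc_succ_top (by omega)]
    simp only [add_comp, X_comp, C_comp, one_comp, Nat.cast_add, Nat.cast_one, map_add, map_one]
    ring

theorem comp_X_sub_C_one_sub_C_mul_eq (v : R[X]) (α : R) (b : ℕ) :
    (v * ∏ i ∈ Finset.Icc 1 (b + 1), (X + C (i : R))).comp (X - C 1)
        - C α * (v * ∏ i ∈ Finset.Icc 1 (b + 1), (X + C (i : R)))
      = (X * v.comp (X - C 1) - C α * ((X + C ((b + 1 : ℕ) : R)) * v))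
        * ∏ i ∈ Finset.Icc 1 b, (X + C (i : R)) := by
  rw [mul_comp, prod_Icc_X_add_C_comp_X_sub_C_one, Finset.prod_Icc_succ_top (by omega)]
  ring

end Shift

theorem rodriguez_villegas_general (a : ℕ) (ha : 1 ≤ a) (α : ℂ) (hα : ∃ n : ℕ, 0 < n ∧ α ^ n = 1)
    (f v : Polynomial ℂ)
    (hfv : f = v * ∏ i ∈ Finset.Icc 1 a, (X + C (i : ℂ)))
    (hv : ∀ z : ℂ, v.IsRoot z → z.re = -((a : ℝ) + 1) / 2) :
    f.comp (X - C 1) - C α * f ≠ 0 ∧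
      ∃ w : Polynomial ℂ,
        f.comp (X - C 1) - C α * f = w * ∏ i ∈ Finset.Icc 1 (a - 1), (X + C (i : ℂ)) ∧
          ∀ z : ℂ, w.IsRoot z → z.re = -(a : ℝ) / 2 := by
  obtain ⟨n, hn, hαn⟩ := hα
  have hα1 : ‖α‖ = 1 := Complex.norm_eq_one_of_pow_eq_one hαn hn.ne'
  obtain ⟨b, rfl⟩ : ∃ b, a = b + 1 := ⟨a - 1, by omega⟩
  set w := X * v.comp (X - C 1) - C α * ((X + C ((b + 1 : ℕ) : ℂ)) * v)
  have hfactor : f.comp (X - C 1) - C α * f = w * ∏ i ∈ Finset.Icc 1 b, (X + C (i : ℂ)) := by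
    rw [hfv, comp_X_sub_C_one_sub_C_mul_eq]
  have hw : ∀ z : ℂ, w.IsRoot z → z.re = -((b + 1 : ℕ) : ℝ) / 2 := fun z hz ↦
    re_eq_of_mul_eval_sub_one_eq hv (by positivity) hα1 <| by
      simpa [w, eval_comp, sub_eq_zero] using hz
  have hw0 : w ≠ 0 := fun h ↦ by
    have := hw 1 (by simp [h])
    norm_num at this
    linarith [b.cast_nonneg (α := ℝ)]
  refine ⟨?_, w, by simpa using hfactor, hw⟩
  rw [hfactor]
  exact mul_ne_zero hw0 (monic_prod_of_monic _ _ fun i _ ↦ monic_X_add_C _).ne_zero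

/-- The lemma of Rodriguez-Villegas: let `α` be a root of unity and `f` a nonzero complex
polynomial of the form `f(x) = v(x)·Π_{i=1}^{a}(x+i)` with every root of `v` on the
vertical line `Re(x) = -(a+1)/2`.  Then `g(x) = f(x-1) - α·f(x)` is nonzero of the form
`g(x) = w(x)·Π_{i=1}^{a-1}(x+i)` with every root of `w` on `Re(x) = -a/2`. -/
theorem rodriguez_villegas (a : ℕ) (ha : 1 ≤ a) (α : ℂ) (hα : ∃ n : ℕ, 0 < n ∧ α ^ n = 1)
    (f v : Polynomial ℂ) (hf0 : f ≠ 0)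
    (hfv : f = v * ∏ i ∈ Finset.Icc 1 a, (X + C (i : ℂ)))
    (hv : ∀ z : ℂ, v.IsRoot z → z.re = -((a : ℝ) + 1) / 2) :
    f.comp (X - C 1) - C α * f ≠ 0 ∧
      ∃ w : Polynomial ℂ,
        f.comp (X - C 1) - C α * f = w * ∏ i ∈ Finset.Icc 1 (a - 1), (X + C (i : ℂ)) ∧
          ∀ z : ℂ, w.IsRoot z → z.re = -(a : ℝ) / 2 :=
  rodriguez_villegas_general a ha α hα f v hfv hv
end

section
/- In the polynomial ring K[e₀,…,e₇,θ] with the lexicographic order θ > e₀ > ⋯ > e₇, the four binomials g₁ = e₀e₂e₄²e₆ − e₁e₃²e₅e₇, g₂ = θ² − e₀e₁e₂e₅e₆e₇, g₃ = θe₃ − e₀e₂e₄e₆, g₄ = θe₄ − e₁e₃e₅e₇ form a Gröbner basis of the ideal they generate. -/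
/-!
Send each variable to the monomial of the vertices of its (hyper)edge in the bow-tie graph: the
triangles `{0,1,2}` and `{4,5,6}` joined by the path `2 – 3 – 4`, with `e₀, …, e₇` the edges and
`θ` the hyperedge of all vertices but `3`. The binomials lie in the kernel of this monomial map,
so every nonzero `f` in the ideal has, besides its leading monomial `x ^ m`, a monomial `x ^ s`
with `s < m` and the same vertex degrees. Solving the seven degree equations: if `s` and `m`
differ in `θ`, then `θ ∣ x ^ m`, and parity on the triangles rules out `x ^ m = θ · u` with `u`
free of `θ, e₃, e₄`, so `θ²`, `θe₃` or `θe₄` divides `x ^ m`; otherwise `m - s` is a positive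
multiple of the exponent vector of the even closed walk `g₁`, whose leading term then divides
`x ^ m`.
-/

open MvPolynomial
open scoped Classical

/-- The lex leading monomial (as an element of `WithBot`) of a polynomial in
`K[θ, e₀, …, e₇]`, the variables being indexed by `Fin 9` with `θ` the variable `0`
(most significant) and `eᵢ` the variable `i+1`, so that the lexicographic order has
`θ > e₀ > ⋯ > e₇`. -/
noncomputable def lexLeadMon {K : Type*} [Field K] (f : MvPolynomial (Fin 9) K) :
    WithBot (Lex (Fin 9 →₀ ℕ)) :=
  (f.support.image toLex).max

/-- `B` is a Gröbner basis of the ideal `I` for the lexicographic order: `B ⊆ I` and for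
every nonzero `f ∈ I` the lex leading monomial of some `g ∈ B` divides the lex leading
monomial of `f` (divisibility of monomials being `≤` of exponent vectors). -/
def IsLexGroebnerBasis {K : Type*} [Field K] (B : Finset (MvPolynomial (Fin 9) K))
    (I : Ideal (MvPolynomial (Fin 9) K)) : Prop :=
  (B : Set (MvPolynomial (Fin 9) K)) ⊆ I ∧
    ∀ f ∈ I, f ≠ 0 → ∃ g ∈ B, ∃ mg mf : Fin 9 →₀ ℕ,
      (↑(toLex mg) : WithBot (Lex (Fin 9 →₀ ℕ))) = lexLeadMon g ∧
        (↑(toLex mf) : WithBot (Lex (Fin 9 →₀ ℕ))) = lexLeadMon f ∧ mg ≤ mf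

open Finsupp (linearCombination)

namespace MvPolynomial

variable {σ τ R : Type*}

section CommSemiring

variable [CommSemiring R]

noncomputable def monomialMap (A : σ → τ →₀ ℕ) : MvPolynomial σ R →ₐ[R] MvPolynomial τ R :=
  aeval fun i => monomial (A i) 1

theorem monomialMap_monomial (A : σ → τ →₀ ℕ) (s : σ →₀ ℕ) (c : R) :
    monomialMap A (monomial s c) = monomial (linearCombination ℕ A s) c := by
  simp only [monomialMap, aeval_monomial, monomial_pow, one_pow, Finsupp.linearCombination_apply,
    monomial_finsupp_sum_index, algebraMap_eq]

theorem exists_mem_support_ne_of_monomialMap_eq_zero {A : σ → τ →₀ ℕ} {f : MvPolynomial σ R}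
    (hf : monomialMap A f = 0) {m : σ →₀ ℕ} (hm : m ∈ f.support) :
    ∃ s ∈ f.support, s ≠ m ∧ linearCombination ℕ A s = linearCombination ℕ A m := by
  by_contra! h
  have hcoeff : coeff (linearCombination ℕ A m) (monomialMap A f) = coeff m f := by
    conv_lhs => rw [f.as_sum, map_sum]
    simp only [monomialMap_monomial, coeff_sum, coeff_monomial]
    rw [Finset.sum_eq_single_of_mem m hm fun s hs hsm => if_neg (h s hs hsm), if_pos rfl]
  rw [hf, coeff_zero] at hcoeff
  exact mem_support_iff.mp hm hcoeff.symm

end CommSemiring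

theorem monomialMap_monomial_sub_monomial [CommRing R] {A : σ → τ →₀ ℕ} {a b : σ →₀ ℕ}
    (h : linearCombination ℕ A a = linearCombination ℕ A b) (c : R) :
    monomialMap A (monomial a c - monomial b c) = 0 := by
  rw [map_sub, monomialMap_monomial, monomialMap_monomial, h, sub_self]

end MvPolynomial

section LexGroebner


variable {K : Type*} [Field K]

theorem exists_mem_support_lexLeadMon_eq {f : MvPolynomial (Fin 9) K} (hf : f ≠ 0) :
    ∃ m ∈ f.support, ((toLex m : Lex (Fin 9 →₀ ℕ)) : WithBot _) = lexLeadMon f ∧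
      ∀ s ∈ f.support, toLex s ≤ toLex m := by
  obtain ⟨M, hM⟩ := Finset.max_of_nonempty ((support_nonempty.2 hf).image toLex)
  obtain ⟨m, hm, rfl⟩ := Finset.mem_image.1 (Finset.mem_of_max hM)
  exact ⟨m, hm, hM.symm, fun s hs => Finset.le_max_of_eq (Finset.mem_image_of_mem _ hs) hM⟩

theorem lexLeadMon_monomial_sub_monomial {a b : Fin 9 →₀ ℕ} (h : toLex b < toLex a) :
    lexLeadMon (monomial a (1 : K) - monomial b 1) = toLex a := by
  have hsupp : (monomial a (1 : K) - monomial b 1).support ⊆ {a, b} :=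
    (support_sub _ _ _).trans (Finset.union_subset_union support_monomial_subset
      support_monomial_subset)
  have ha : a ∈ (monomial a (1 : K) - monomial b 1).support := by
    have hba : b ≠ a := fun hba => h.ne (congrArg toLex hba)
    simp [coeff_monomial, hba]
  refine le_antisymm (Finset.max_le ?_) (Finset.le_max (Finset.mem_image_of_mem _ ha))
  simp only [Finset.mem_image]
  rintro _ ⟨x, hx, rfl⟩
  rcases Finset.mem_insert.1 (hsupp hx) with rfl | hx
  · exact le_rfl
  · rw [Finset.mem_singleton.1 hx]
    exact WithBot.coe_le_coe.2 h.le

theorem isLexGroebnerBasis_span_of_binomials {ι τ : Type*} (A : Fin 9 → τ →₀ ℕ)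
    (a b : ι → Fin 9 →₀ ℕ) (B : Finset (MvPolynomial (Fin 9) K))
    (hB : (B : Set (MvPolynomial (Fin 9) K)) =
      Set.range fun k => monomial (a k) 1 - monomial (b k) 1)
    (hdeg : ∀ k, linearCombination ℕ A (a k) = linearCombination ℕ A (b k))
    (hlt : ∀ k, toLex (b k) < toLex (a k))
    (hlead : ∀ s m : Fin 9 →₀ ℕ, linearCombination ℕ A s = linearCombination ℕ A m →
      toLex s < toLex m → ∃ k, a k ≤ m) :
    IsLexGroebnerBasis B (Ideal.span B) := by
  have hker : Ideal.span (B : Set (MvPolynomial (Fin 9) K)) ≤ RingHom.ker (monomialMap A) := by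
    rw [Ideal.span_le, hB]
    rintro _ ⟨k, rfl⟩
    exact monomialMap_monomial_sub_monomial (hdeg k) 1
  refine ⟨Ideal.subset_span, fun f hf hf0 => ?_⟩
  obtain ⟨m, hm, hLM, hmax⟩ := exists_mem_support_lexLeadMon_eq hf0
  obtain ⟨s, hs, hsm, hsdeg⟩ := exists_mem_support_ne_of_monomialMap_eq_zero (hker hf) hm
  obtain ⟨k, hk⟩ := hlead s m hsdeg ((hmax s hs).lt_of_ne (toLex.injective.ne hsm))
  have hkB : monomial (a k) 1 - monomial (b k) 1 ∈ B := by
    rw [← Finset.mem_coe, hB]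
    exact ⟨k, rfl⟩
  exact ⟨_, hkB, a k, m, (lexLeadMon_monomial_sub_monomial (hlt k)).symm, hLM, hk⟩

end LexGroebner

namespace Bowtie


/-- Rows are indexed by `θ, e₀, …, e₇`, columns by the vertices `0, …, 6`. -/
noncomputable def incidence (i : Fin 9) : Fin 7 →₀ ℕ :=
  Finsupp.equivFunOnFinite.symm <| !![1, 1, 1, 0, 1, 1, 1;
                                      1, 0, 1, 0, 0, 0, 0;
                                      1, 1, 0, 0, 0, 0, 0;
                                      0, 1, 1, 0, 0, 0, 0;
                                      0, 0, 1, 1, 0, 0, 0;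
                                      0, 0, 0, 1, 1, 0, 0;
                                      0, 0, 0, 0, 1, 1, 0;
                                      0, 0, 0, 0, 0, 1, 1;
                                      0, 0, 0, 0, 1, 0, 1] i

noncomputable def lead (k : Fin 4) : Fin 9 →₀ ℕ :=
  Finsupp.equivFunOnFinite.symm <| !![0, 1, 0, 1, 0, 2, 0, 1, 0;
                                      2, 0, 0, 0, 0, 0, 0, 0, 0;
                                      1, 0, 0, 0, 1, 0, 0, 0, 0;
                                      1, 0, 0, 0, 0, 1, 0, 0, 0] k

noncomputable def trail (k : Fin 4) : Fin 9 →₀ ℕ :=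
  Finsupp.equivFunOnFinite.symm <| !![0, 0, 1, 0, 2, 0, 1, 0, 1;
                                      0, 1, 1, 1, 0, 0, 1, 1, 1;
                                      0, 1, 0, 1, 0, 1, 0, 1, 0;
                                      0, 0, 1, 0, 1, 0, 1, 0, 1] k

theorem linearCombination_incidence_apply (s : Fin 9 →₀ ℕ) (v : Fin 7) :
    linearCombination ℕ incidence s v = ∑ i, s i * incidence i v := by
  simp [Finsupp.linearCombination_apply, Finsupp.sum_fintype]

theorem linearCombination_incidence_lead (k : Fin 4) :
    linearCombination ℕ incidence (lead k) = linearCombination ℕ incidence (trail k) := by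
  ext v
  simp only [linearCombination_incidence_apply, Fin.sum_univ_succ]
  fin_cases k <;> fin_cases v <;> simp [lead, trail, incidence]

theorem trail_lt_lead (k : Fin 4) : toLex (trail k) < toLex (lead k) := by
  fin_cases k <;> simp [Finsupp.Lex.lt_iff, Fin.exists_fin_succ, Fin.forall_fin_succ, lead, trail]

theorem exists_lead_le (s m : Fin 9 →₀ ℕ)
    (hdeg : linearCombination ℕ incidence s = linearCombination ℕ incidence m)
    (hlt : toLex s < toLex m) : ∃ k, lead k ≤ m := by
  have hv : ∀ v, ∑ i, s i * incidence i v = ∑ i, m i * incidence i v := fun v => by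
    simp only [← linearCombination_incidence_apply, hdeg]
  simp only [incidence, lead, Finsupp.equivFunOnFinite_symm_apply_apply, Matrix.of_apply,
    Matrix.cons_val', Matrix.cons_val_zero, Matrix.cons_val_succ, Matrix.cons_val_fin_one,
    Fin.succ_zero_eq_one, Fin.succ_one_eq_two, Fin.reduceSucc, Fin.sum_univ_succ,
    Fin.sum_univ_zero, Fin.forall_fin_succ, Fin.exists_fin_succ, IsEmpty.forall_iff,
    IsEmpty.exists_iff, Finsupp.le_def, mul_one, mul_zero, add_zero, zero_add, and_true,
    or_false] at hv ⊢
  obtain ⟨i, hj, hi⟩ := Finsupp.Lex.lt_iff.mp hlt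
  fin_cases i <;>
    simp only [ofLex_toLex, Fin.reduceFinMk, Fin.zero_eta, Fin.mk_one, Fin.forall_fin_succ,
      Fin.reduceLT, Fin.lt_one_iff, not_lt_zero, lt_self_iff_false, Fin.succ_zero_eq_one,
      Fin.succ_one_eq_two, Fin.reduceSucc, IsEmpty.forall_iff, forall_const, forall_eq,
      and_true] at hj hi <;>
    omega

theorem monomial_lead_sub_monomial_trail {R : Type*} [CommRing R] :
    (fun k => monomial (lead k) (1 : R) - monomial (trail k) 1) =
      ![X 1 * X 3 * X 5 ^ 2 * X 7 - X 2 * X 4 ^ 2 * X 6 * X 8,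
        X 0 ^ 2 - X 1 * X 2 * X 3 * X 6 * X 7 * X 8,
        X 0 * X 4 - X 1 * X 3 * X 5 * X 7,
        X 0 * X 5 - X 2 * X 4 * X 6 * X 8] := by
  funext k
  simp only [monomial_eq, C_1, one_mul]
  rw [Finsupp.prod_fintype _ _ fun _ => pow_zero _, Finsupp.prod_fintype _ _ fun _ => pow_zero _]
  fin_cases k <;>
    simp only [lead, trail, Finsupp.equivFunOnFinite_symm_apply_apply, Matrix.of_apply,
      Matrix.cons_val', Matrix.cons_val_zero, Matrix.cons_val_succ, Matrix.cons_val_fin_one,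
      Fin.zero_eta, Fin.mk_one, Fin.reduceFinMk, Fin.succ_zero_eq_one, Fin.succ_one_eq_two,
      Fin.reduceSucc, Fin.isValue, Matrix.cons_val_one, Matrix.cons_val, Fin.prod_univ_succ,
      Fin.prod_univ_zero] <;>
    ring

end Bowtie

theorem bowtie_groebner_basis_general {K : Type*} [Field K] :
    let θ : MvPolynomial (Fin 9) K := X 0
    let e : Fin 8 → MvPolynomial (Fin 9) K := fun i => X i.succ
    let g₁ := e 0 * e 2 * e 4 ^ 2 * e 6 - e 1 * e 3 ^ 2 * e 5 * e 7
    let g₂ := θ ^ 2 - e 0 * e 1 * e 2 * e 5 * e 6 * e 7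
    let g₃ := θ * e 3 - e 0 * e 2 * e 4 * e 6
    let g₄ := θ * e 4 - e 1 * e 3 * e 5 * e 7
    IsLexGroebnerBasis {g₁, g₂, g₃, g₄} (Ideal.span {g₁, g₂, g₃, g₄}) := by
  intro θ e g₁ g₂ g₃ g₄
  have hB : (({g₁, g₂, g₃, g₄} : Finset _) : Set (MvPolynomial (Fin 9) K)) =
      Set.range fun k => monomial (Bowtie.lead k) 1 - monomial (Bowtie.trail k) 1 := by
    rw [Bowtie.monomial_lead_sub_monomial_trail]
    simp only [Finset.coe_insert, Finset.coe_singleton, Matrix.range_cons, Matrix.range_empty,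
      Set.union_empty, Set.singleton_union]
    rfl
  simpa only [Finset.coe_insert, Finset.coe_singleton] using
    isLexGroebnerBasis_span_of_binomials Bowtie.incidence Bowtie.lead Bowtie.trail _ hB
      Bowtie.linearCombination_incidence_lead Bowtie.trail_lt_lead Bowtie.exists_lead_le

/-- In `K[e₀,…,e₇,θ]` (K a field of characteristic zero) with the lexicographic order
`θ > e₀ > ⋯ > e₇` (here `θ` is variable `0` and `eᵢ` is variable `i+1`), the four
binomials `g₁ = e₀e₂e₄²e₆ − e₁e₃²e₅e₇`, `g₂ = θ² − e₀e₁e₂e₅e₆e₇`,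
`g₃ = θe₃ − e₀e₂e₄e₆`, `g₄ = θe₄ − e₁e₃e₅e₇` form a Gröbner basis of the ideal they
generate. -/
theorem bowtie_groebner_basis {K : Type*} [Field K] [CharZero K] :
    let θ : MvPolynomial (Fin 9) K := X 0
    let e : Fin 8 → MvPolynomial (Fin 9) K := fun i => X i.succ
    let g₁ := e 0 * e 2 * e 4 ^ 2 * e 6 - e 1 * e 3 ^ 2 * e 5 * e 7
    let g₂ := θ ^ 2 - e 0 * e 1 * e 2 * e 5 * e 6 * e 7
    let g₃ := θ * e 3 - e 0 * e 2 * e 4 * e 6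
    let g₄ := θ * e 4 - e 1 * e 3 * e 5 * e 7
    IsLexGroebnerBasis {g₁, g₂, g₃, g₄} (Ideal.span {g₁, g₂, g₃, g₄}) :=
  bowtie_groebner_basis_general
end
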